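/- arXiv:1802.01920 — 5 statements merged into one kernel-verified Lean document; each statement's English description precedes it below -/
import Mathlib

section
/- Let d = (d_1,...,d_n) be positive integers, F ∈ K[x]^{m×n} with the j-th column of degree < d_j, and P ∈ K[x]^{m×m}. Then P is a basis of the module A_d(F) = {p ∈ K[x]^{1×m} | pF ≡ 0 mod diag(x^{d_1},...,x^{d_n})} if and only if there exists Q ∈ K[x]^{m×n} such that the block matrix [P Q] ∈ K[x]^{m×(m+n)} is a kernel basis for the (m+n)×n matrix whose top block is F and bottom block is −diag(x^{d_1},...,x^{d_n}). -/
open Polynomial Matrix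

noncomputable section

def approxModule {m n : ℕ} {K : Type*} [Field K] (d : Fin n → ℕ)
    (F : Matrix (Fin m) (Fin n) K[X]) : Submodule K[X] (Fin m → K[X]) where
  carrier := {p | ∀ j, (X : K[X]) ^ d j ∣ Matrix.vecMul p F j}
  zero_mem' := by intro j; simp [Matrix.zero_vecMul]
  add_mem' := by
    intro a b ha hb j
    rw [Matrix.add_vecMul, Pi.add_apply]
    exact dvd_add (ha j) (hb j)
  smul_mem' := by
    intro c p hp j
    rw [Matrix.smul_vecMul, Pi.smul_apply, smul_eq_mul]
    exact (hp j).mul_left c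

def rowsBasis {κ ι : Type*} {K : Type*} [Field K] (B : Matrix κ ι K[X])
    (N : Submodule K[X] (ι → K[X])) : Prop :=
  LinearIndependent K[X] (fun i => B i) ∧
    Submodule.span K[X] (Set.range fun i => B i) = N

/-! Projecting `K[x]^{m+n}` onto its first `m` coordinates maps the kernel of
`[F ; −diag(x^{d_j})]` isomorphically onto `A_d(F)`: a kernel vector `(p, q)` satisfies
`p F = q · diag(x^{d_j})`, so `q` is determined by `p` because the `x^{d_j}` are not zero divisors,
and every approximant `p` has such a `q`. The rows of `[P Q]` lie in the kernel and project to the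
rows of `P`, and a linear map that is injective on a submodule carries bases of that submodule to
bases of its image. -/

open Submodule in
theorem linearIndependent_and_span_eq_iff_comp {R M M' ι : Type*} [Ring R] [AddCommGroup M]
    [AddCommGroup M'] [Module R M] [Module R M'] (f : M →ₗ[R] M') {N : Submodule R M}
    (hN : Disjoint N (LinearMap.ker f)) {v : ι → M} (hv : ∀ i, v i ∈ N) :
    (LinearIndependent R v ∧ span R (Set.range v) = N) ↔
      (LinearIndependent R (f ∘ v) ∧ span R (Set.range (f ∘ v)) = N.map f) := by
  rw [Set.range_comp, span_image]
  refine ⟨fun ⟨hli, hspan⟩ => ⟨hli.map (hspan ▸ hN), hspan ▸ rfl⟩,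
    fun ⟨hli, hspan⟩ => ⟨hli.of_comp f, ?_⟩⟩
  have hle : span R (Set.range v) ≤ N := span_le.2 (Set.range_subset_iff.2 hv)
  have hge : N ≤ span R (Set.range v) ⊔ LinearMap.ker f :=
    (LinearMap.map_le_map_iff f).1 hspan.ge
  calc span R (Set.range v) = span R (Set.range v) ⊔ LinearMap.ker f ⊓ N := by
        rw [hN.symm.eq_bot, sup_bot_eq]
    _ = (span R (Set.range v) ⊔ LinearMap.ker f) ⊓ N := (sup_inf_assoc_of_le _ hle).symm
    _ = N := inf_eq_right.2 hge

theorem rowsBasis.row_mem {κ ι K : Type*} [Field K] {B : Matrix κ ι K[X]}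
    {N : Submodule K[X] (ι → K[X])} (hB : rowsBasis B N) (i : κ) : B i ∈ N :=
  hB.2 ▸ Submodule.subset_span ⟨i, rfl⟩

theorem rowsBasis_fromCols_iff {κ ι₁ ι₂ K : Type*} [Field K] {P : Matrix κ ι₁ K[X]}
    {Q : Matrix κ ι₂ K[X]} {N : Submodule K[X] (ι₁ ⊕ ι₂ → K[X])}
    (hN : Disjoint N (LinearMap.ker (LinearMap.funLeft K[X] K[X] Sum.inl)))
    (hPQ : ∀ i, fromCols P Q i ∈ N) :
    rowsBasis (fromCols P Q) N ↔ rowsBasis P (N.map (LinearMap.funLeft K[X] K[X] Sum.inl)) :=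
  linearIndependent_and_span_eq_iff_comp _ hN hPQ

section

variable {K : Type*} [Field K] {m n : ℕ}

def approxKernel (d : Fin n → ℕ) (F : Matrix (Fin m) (Fin n) K[X]) :
    Submodule K[X] (Fin m ⊕ Fin n → K[X]) :=
  LinearMap.ker (vecMulLinear (fromRows F (-(diagonal fun j => (X : K[X]) ^ d j))))

theorem mem_approxKernel_iff {d : Fin n → ℕ} {F : Matrix (Fin m) (Fin n) K[X]}
    {v : Fin m ⊕ Fin n → K[X]} :
    v ∈ approxKernel d F ↔ ∀ j, vecMul (v ∘ Sum.inl) F j = X ^ d j * v (Sum.inr j) := by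
  rw [approxKernel, LinearMap.mem_ker, vecMulLinear_apply, ← Sum.elim_comp_inl_inr v,
    sumElim_vecMul_fromRows, vecMul_neg, funext_iff]
  simp [vecMul_diagonal, add_neg_eq_zero, mul_comm]

theorem disjoint_approxKernel_ker_funLeft_inl (d : Fin n → ℕ)
    (F : Matrix (Fin m) (Fin n) K[X]) :
    Disjoint (approxKernel d F) (LinearMap.ker (LinearMap.funLeft K[X] K[X] Sum.inl)) := by
  rw [Submodule.disjoint_def]
  intro v hv hinl
  have hinl : v ∘ Sum.inl = 0 := hinl
  have hinr j : v (Sum.inr j) = 0 := by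
    simpa [hinl, pow_ne_zero, X_ne_zero] using (mem_approxKernel_iff.1 hv j).symm
  ext (i | j) : 1
  exacts [congrFun hinl i, hinr j]

theorem map_funLeft_inl_approxKernel (d : Fin n → ℕ) (F : Matrix (Fin m) (Fin n) K[X]) :
    (approxKernel d F).map (LinearMap.funLeft K[X] K[X] Sum.inl) = approxModule d F := by
  ext p
  constructor
  · rintro ⟨v, hv, rfl⟩ j
    exact ⟨_, mem_approxKernel_iff.1 hv j⟩
  · intro hp
    choose q hq using hp
    exact ⟨Sum.elim p q, mem_approxKernel_iff.2 hq, rfl⟩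

theorem exists_fromCols_mem_approxKernel {d : Fin n → ℕ} {F : Matrix (Fin m) (Fin n) K[X]}
    {P : Matrix (Fin m) (Fin m) K[X]} (hP : ∀ i, P i ∈ approxModule d F) :
    ∃ Q : Matrix (Fin m) (Fin n) K[X], ∀ i, fromCols P Q i ∈ approxKernel d F := by
  choose Q hQ using hP
  exact ⟨Q, fun i => mem_approxKernel_iff.2 (hQ i)⟩

end

theorem approx_basis_iff_kernel_basis_general
    {K : Type*} [Field K] {m n : ℕ} (d : Fin n → ℕ)
    (F : Matrix (Fin m) (Fin n) K[X])
    (P : Matrix (Fin m) (Fin m) K[X]) :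
    rowsBasis P (approxModule d F) ↔
      ∃ Q : Matrix (Fin m) (Fin n) K[X],
        rowsBasis (Matrix.fromCols P Q)
          (LinearMap.ker (Matrix.vecMulLinear
            (Matrix.fromRows F (-(Matrix.diagonal fun j => (X : K[X]) ^ d j))))) := by
  change _ ↔ ∃ Q, rowsBasis (fromCols P Q) (approxKernel d F)
  have hdisj := disjoint_approxKernel_ker_funLeft_inl d F
  constructor
  · intro hP
    obtain ⟨Q, hQ⟩ := exists_fromCols_mem_approxKernel hP.row_mem
    refine ⟨Q, (rowsBasis_fromCols_iff hdisj hQ).2 ?_⟩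
    rwa [map_funLeft_inl_approxKernel]
  · rintro ⟨Q, hPQ⟩
    rw [← map_funLeft_inl_approxKernel]
    exact (rowsBasis_fromCols_iff hdisj hPQ.row_mem).1 hPQ

/-- `P` is a basis of the approximant module `A_d(F)` iff `[P Q]` is a kernel basis of
`[F ; −diag(x^{d_j})]` for some `Q`. -/
theorem approx_basis_iff_kernel_basis
    {K : Type*} [Field K] {m n : ℕ} (d : Fin n → ℕ) (hd : ∀ j, 0 < d j)
    (F : Matrix (Fin m) (Fin n) K[X])
    (hF : ∀ i j, (F i j).degree < (d j : ℕ∞))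
    (P : Matrix (Fin m) (Fin m) K[X]) :
    rowsBasis P (approxModule d F) ↔
      ∃ Q : Matrix (Fin m) (Fin n) K[X],
        rowsBasis (Matrix.fromCols P Q)
          (LinearMap.ker (Matrix.vecMulLinear
            (Matrix.fromRows F (-(Matrix.diagonal fun j => (X : K[X]) ^ d j))))) :=
  approx_basis_iff_kernel_basis_general d F P
end
end

section
/- Let d ∈ (Z_{>0})^n, F ∈ K[x]^{m×n} with column degrees < d, and let P ∈ K[x]^{m×m} be a basis of the approximant module A_d(F). Then P·F = Q·diag(x^{d_1},...,x^{d_n}) where Q = P·F·diag(x^{−d_1},...,x^{−d_n}) ∈ K[x]^{m×n}, and there exist V ∈ K[x]^{m×m} and W ∈ K[x]^{n×m} such that P·V + Q·W = I_m. -/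
open Polynomial Matrix

noncomputable section

/-!
The rows of `[P | Q]` form a basis of the left kernel of the stacked matrix `[F; -diag(xᵈ)]`:
if `(p, q)` lies in that kernel then `p ∈ A_d(F)`, so `p` is a combination of the rows of `P`,
and cancelling the (injective) diagonal recovers `q` from the same combination of the rows of `Q`.
Over the PID `K[x]` the image of `[F; -diag(xᵈ)]` is free, so its kernel is a direct summand;
a retraction onto it, written in the basis of rows of `[P | Q]`, is a right inverse `[V; W]`.
-/

namespace Matrix

variable {R ι κ μ ν : Type*} [CommRing R]

theorem exists_mul_eq_one_of_leftInverse_vecMulLinear [Fintype ι] [DecidableEq ι] [Fintype κ]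
    [DecidableEq κ] (M : Matrix ι κ R) (l : (κ → R) →ₗ[R] ι → R)
    (hl : l ∘ₗ M.vecMulLinear = LinearMap.id) :
    ∃ N : Matrix κ ι R, M * N = 1 := by
  refine ⟨LinearMap.toMatrixRight' l, toLinearMapRight'.injective (LinearMap.ext fun v => ?_)⟩
  simpa [toLinearMapRight'_mul_apply] using LinearMap.congr_fun hl v

theorem exists_mul_eq_one_of_range_eq_ker [IsDomain R] [IsPrincipalIdealRing R]
    [Fintype ι] [DecidableEq ι] [Fintype κ] [DecidableEq κ] [Finite μ]
    (M : Matrix ι κ R) (G : Matrix κ μ R) (hM : LinearIndependent R M.row)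
    (h : LinearMap.range M.vecMulLinear = LinearMap.ker G.vecMulLinear) :
    ∃ N : Matrix κ ι R, M * N = 1 := by
  have hexact : Function.Exact M.vecMulLinear G.vecMulLinear.rangeRestrict :=
    LinearMap.exact_iff.2 (by rw [LinearMap.ker_rangeRestrict, h])
  obtain ⟨s, hs⟩ := G.vecMulLinear.rangeRestrict.exists_rightInverse_of_surjective
    (LinearMap.range_rangeRestrict _)
  have hsplit := (hexact.split_tfae (vecMul_injective_iff.2 hM)
    G.vecMulLinear.surjective_rangeRestrict).out 0 1
  obtain ⟨l, hl⟩ := hsplit.1 ⟨s, hs⟩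
  exact M.exists_mul_eq_one_of_leftInverse_vecMulLinear l hl

theorem vecMul_diagonal_injective [DecidableEq ι] [Fintype ι] [NoZeroDivisors R] {c : ι → R}
    (hc : ∀ j, c j ≠ 0) : Function.Injective (diagonal c).vecMul :=
  fun v w h => funext fun j => by simpa [vecMul_diagonal, hc j] using congr_fun h j

theorem linearIndependent_row_fromCols [Fintype μ] {P : Matrix μ κ R} (Q : Matrix μ ι R)
    (hP : LinearIndependent R P.row) : LinearIndependent R (fromCols P Q).row := by
  rw [← vecMul_injective_iff] at hP ⊢
  exact fun v w h => hP (funext fun j => by simpa using congr_fun h (Sum.inl j))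

theorem exists_mul_eq_mul_of_range_le_comap [Fintype μ] [Fintype κ] [Fintype ν]
    {P : Matrix μ κ R} {F : Matrix κ ι R} {D : Matrix ν ι R}
    (h : LinearMap.range P.vecMulLinear ≤ (LinearMap.range D.vecMulLinear).comap F.vecMulLinear) :
    ∃ Q : Matrix μ ν R, P * F = Q * D := by
  have hrow : ∀ i, ∃ q, q ᵥ* D = P i ᵥ* F := fun i =>
    h (by rw [range_vecMulLinear]; exact Submodule.subset_span ⟨i, rfl⟩)
  choose Q hQ using hrow
  refine ⟨of Q, funext fun i => ?_⟩
  rw [mul_apply_eq_vecMul, mul_apply_eq_vecMul]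
  exact (hQ i).symm

theorem ker_vecMulLinear_fromRows_neg_eq_range [Fintype μ] [Fintype κ] [Fintype ν]
    {P : Matrix μ κ R} {F : Matrix κ ι R} {Q : Matrix μ ν R} {D : Matrix ν ι R}
    (hD : Function.Injective D.vecMul)
    (hP : LinearMap.range P.vecMulLinear = (LinearMap.range D.vecMulLinear).comap F.vecMulLinear)
    (hPQ : P * F = Q * D) :
    LinearMap.ker (fromRows F (-D)).vecMulLinear = LinearMap.range (fromCols P Q).vecMulLinear := by
  ext v
  obtain ⟨p, q, rfl⟩ : ∃ p q, v = Sum.elim p q := ⟨_, _, (Sum.elim_comp_inl_inr v).symm⟩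
  simp only [LinearMap.mem_ker, LinearMap.mem_range, vecMulLinear_apply, sumElim_vecMul_fromRows,
    vecMul_neg, ← sub_eq_add_neg, sub_eq_zero]
  constructor
  · intro h
    obtain ⟨w, rfl⟩ : p ∈ LinearMap.range P.vecMulLinear := by rw [hP]; exact ⟨q, h.symm⟩
    have hq : w ᵥ* Q ᵥ* D = q ᵥ* D := by
      rw [vecMul_vecMul, ← hPQ, ← vecMul_vecMul]
      exact h
    exact ⟨w, by rw [vecMulLinear_apply, vecMul_fromCols, hD hq]⟩
  · rintro ⟨w, hw⟩
    obtain rfl : w ᵥ* P = p := funext fun i => congr_fun hw (Sum.inl i)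
    obtain rfl : w ᵥ* Q = q := funext fun j => congr_fun hw (Sum.inr j)
    rw [vecMul_vecMul, hPQ, ← vecMul_vecMul]

end Matrix

theorem approxModule_eq_comap {K : Type*} [Field K] {m n : ℕ} (d : Fin n → ℕ)
    (F : Matrix (Fin m) (Fin n) K[X]) :
    approxModule d F = (LinearMap.range
      (diagonal fun j => (X : K[X]) ^ d j).vecMulLinear).comap F.vecMulLinear := by
  ext p
  simp only [Submodule.mem_comap, LinearMap.mem_range, vecMulLinear_apply, funext_iff,
    vecMul_diagonal]
  refine (forall_congr' fun j => ?_).trans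
    (Classical.skolem (p := fun j c => c * (X : K[X]) ^ d j = (p ᵥ* F) j))
  rw [dvd_iff_exists_eq_mul_left]
  exact exists_congr fun c => eq_comm

theorem approx_basis_bezout_general
    {K : Type*} [Field K] {m n : ℕ} (d : Fin n → ℕ)
    (F : Matrix (Fin m) (Fin n) K[X])
    (P : Matrix (Fin m) (Fin m) K[X])
    (hP : rowsBasis P (approxModule d F)) :
    ∃ Q : Matrix (Fin m) (Fin n) K[X],
      P * F = Q * Matrix.diagonal (fun j => (X : K[X]) ^ d j) ∧
      ∃ (V : Matrix (Fin m) (Fin m) K[X]) (W : Matrix (Fin n) (Fin m) K[X]),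
        P * V + Q * W = 1 := by
  have hrange : LinearMap.range P.vecMulLinear = (LinearMap.range
      (diagonal fun j => (X : K[X]) ^ d j).vecMulLinear).comap F.vecMulLinear := by
    rw [range_vecMulLinear, ← approxModule_eq_comap]
    exact hP.2
  obtain ⟨Q, hPQ⟩ := exists_mul_eq_mul_of_range_le_comap hrange.le
  have hD := vecMul_diagonal_injective fun j => pow_ne_zero (d j) (X_ne_zero (R := K))
  obtain ⟨N, hN⟩ := exists_mul_eq_one_of_range_eq_ker (fromCols P Q) _
    (linearIndependent_row_fromCols Q hP.1)
    (ker_vecMulLinear_fromRows_neg_eq_range hD hrange hPQ).symm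
  refine ⟨Q, hPQ, N.toRows₁, N.toRows₂, ?_⟩
  rw [← fromCols_mul_fromRows, fromRows_toRows, hN]

/-- If `P` is a basis of `A_d(F)` then `P·F = Q·diag(x^{d_j})` with
`Q = P·F·diag(x^{−d_j})`, and `P·V + Q·W = I` for some `V, W`. -/
theorem approx_basis_bezout
    {K : Type*} [Field K] {m n : ℕ} (d : Fin n → ℕ) (hd : ∀ j, 0 < d j)
    (F : Matrix (Fin m) (Fin n) K[X])
    (hF : ∀ i j, (F i j).degree < (d j : ℕ∞))
    (P : Matrix (Fin m) (Fin m) K[X])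
    (hP : rowsBasis P (approxModule d F)) :
    ∃ Q : Matrix (Fin m) (Fin n) K[X],
      P * F = Q * Matrix.diagonal (fun j => (X : K[X]) ^ d j) ∧
      ∃ (V : Matrix (Fin m) (Fin m) K[X]) (W : Matrix (Fin n) (Fin m) K[X]),
        P * V + Q * W = 1 :=
  approx_basis_bezout_general d F P hP
end
end

section
/- Let d ∈ (Z_{>0})^n and F ∈ K[x]^{m×n} with column degrees < d. Let P ∈ K[x]^{m×m} satisfy: (a) P·F ≡ 0 mod diag(x^{d_1},...,x^{d_n}); (b) det(P) is a nonzero monomial c·x^δ. Let C ∈ K^{m×n} be the constant coefficient of P·F·diag(x^{−d_1},...,x^{−d_n}). Then P is a basis of the approximant module A_d(F) if and only if the m×(m+n) constant matrix [P(0) C] has rank m. -/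
/-!
For a constant vector `u`, `u · [P(0) C] = 0` says exactly that `u P ≡ 0 mod x` with
`(u P) / x ∈ A_d(F)`: the first block kills the constant term, and, since `x^{d_j}` already
divides `(u P F)_j`, the second block kills its coefficient of `x^{d_j}`. If the rows of `P`
span `A_d(F)`, such a `u` gives `u P = x w P`, so `u = x w` and `u = 0`. Conversely, given full
rank, any relation `w P = x^{k+1} p` with `p ∈ A_d(F)` forces `w(0) = 0`, hence descends to
`(w / x) P = x^k p`; since `det P ∣ x^δ`, the adjugate gives `w P = x^δ p` to start from.
-/

open Polynomial Matrix

noncomputable section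

namespace Polynomial

variable {R : Type*} [Semiring R]

theorem coeff_mul_of_X_pow_dvd {a b : R[X]} {k : ℕ} (hb : X ^ k ∣ b) :
    (a * b).coeff k = a.coeff 0 * b.coeff k := by
  obtain ⟨b', rfl⟩ := hb
  rw [← mul_assoc, ← X_pow_mul (p := a), mul_assoc]
  simp [coeff_X_pow_mul', mul_coeff_zero]

theorem X_pow_succ_dvd_iff {p : R[X]} {k : ℕ} (hp : X ^ k ∣ p) :
    X ^ (k + 1) ∣ p ↔ p.coeff k = 0 := by
  rw [X_pow_dvd_iff] at hp ⊢
  refine ⟨fun h => h k k.lt_succ_self, fun h e he => ?_⟩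
  rcases Nat.lt_succ_iff_lt_or_eq.mp he with he | rfl
  exacts [hp e he, h]

theorem eq_X_smul_divX {ι : Type*} {v : ι → R[X]} (hv : ∀ i, (v i).coeff 0 = 0) :
    v = (X : R[X]) • fun i => (v i).divX := by
  funext i
  simpa [hv i] using (X_mul_divX_add (v i)).symm

end Polynomial

theorem Matrix.rank_eq_iff_vecMul_eq_zero {K ι : Type*} [Field K] [Fintype ι] {m : ℕ}
    (A : Matrix (Fin m) ι K) : A.rank = m ↔ ∀ u, u ᵥ* A = 0 → u = 0 := by
  calc A.rank = m ↔ LinearIndependent K A.row := by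
        rw [linearIndependent_iff_card_eq_finrank_span, Set.finrank, ← rank_eq_finrank_span_row,
          Fintype.card_fin, eq_comm]
    _ ↔ Function.Injective A.vecMulLinear := vecMul_injective_iff.symm
    _ ↔ _ := injective_iff_map_eq_zero _

theorem Matrix.exists_vecMul_eq_smul_of_det_dvd {R ι : Type*} [CommRing R] [Fintype ι]
    [DecidableEq ι] (P : Matrix ι ι R) {a : R} (ha : P.det ∣ a) (p : ι → R) :
    ∃ w, w ᵥ* P = a • p := by
  obtain ⟨b, rfl⟩ := ha
  refine ⟨b • (p ᵥ* adjugate P), ?_⟩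
  rw [smul_vecMul, vecMul_vecMul, adjugate_mul, vecMul_smul, vecMul_one, smul_smul, mul_comm]

theorem Matrix.exists_vecMul_eq_iff_mem_span_row {R ι κ : Type*} [CommSemiring R] [Fintype κ]
    (P : Matrix κ ι R) (q : ι → R) :
    (∃ w, w ᵥ* P = q) ↔ q ∈ Submodule.span R (Set.range P.row) := by
  rw [← range_vecMulLinear]; rfl

section

variable {K : Type*} [Field K] {m n : ℕ} (d : Fin n → ℕ) (F : Matrix (Fin m) (Fin n) K[X])
  (P : Matrix (Fin m) (Fin m) K[X])

/-- The matrix `[P(0) C]`: column `j` of `C` holds the `x^{d_j}`-coefficients of column `j`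
of `P F`, i.e. the constant coefficients of `P F diag(x^{-d_j})`. -/
def residualMatrix : Matrix (Fin m) (Fin m ⊕ Fin n) K :=
  fromCols (P.map (eval 0)) (of fun i j => ((P * F) i j).coeff (d j))

variable {d F P}

theorem exists_mem_approxModule_eq_X_smul_iff (v : Fin m → K[X]) :
    (∃ q ∈ approxModule d F, v = (X : K[X]) • q) ↔
      (∀ i, (v i).coeff 0 = 0) ∧ ∀ j, (X : K[X]) ^ (d j + 1) ∣ (v ᵥ* F) j := by
  have hXq (q : Fin m → K[X]) : ((X : K[X]) • q) ᵥ* F = X • (q ᵥ* F) := smul_vecMul _ _ _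
  constructor
  · rintro ⟨q, hq, rfl⟩
    refine ⟨fun i => by simp, fun j => ?_⟩
    rw [hXq, Pi.smul_apply, smul_eq_mul, pow_succ']
    exact mul_dvd_mul_left _ (hq j)
  · rintro ⟨hv0, hvF⟩
    have hv := eq_X_smul_divX hv0
    refine ⟨_, fun j => ?_, hv⟩
    have := hvF j
    rw [hv, hXq, Pi.smul_apply, smul_eq_mul, pow_succ'] at this
    exact (mul_dvd_mul_iff_left X_ne_zero).mp this

theorem vecMul_residualMatrix_eq_zero_iff (hdvd : ∀ i j, (X : K[X]) ^ d j ∣ (P * F) i j)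
    (w : Fin m → K[X]) :
    (fun i => (w i).eval 0) ᵥ* residualMatrix d F P = 0 ↔
      ∃ q ∈ approxModule d F, w ᵥ* P = (X : K[X]) • q := by
  have hconst : (fun i => (w i).eval 0) ᵥ* P.map (eval 0) = 0 ↔
      ∀ j, ((w ᵥ* P) j).coeff 0 = 0 := by
    refine funext_iff.trans (forall_congr' fun j => ?_)
    rw [coeff_zero_eq_eval_zero, ← coe_evalRingHom, RingHom.map_vecMul]
    rfl
  have hhigh : (fun i => (w i).eval 0) ᵥ* (of fun i j => ((P * F) i j).coeff (d j)) = 0 ↔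
      ∀ j, (X : K[X]) ^ (d j + 1) ∣ ((w ᵥ* P) ᵥ* F) j := by
    refine funext_iff.trans (forall_congr' fun j => ?_)
    rw [vecMul_vecMul]
    change ∑ i, (w i).eval 0 * ((P * F) i j).coeff (d j) = 0 ↔
      X ^ (d j + 1) ∣ ∑ i, w i * (P * F) i j
    rw [X_pow_succ_dvd_iff (Finset.dvd_sum fun i _ => (hdvd i j).mul_left _), finsetSum_coeff]
    simp only [coeff_mul_of_X_pow_dvd (hdvd _ j), coeff_zero_eq_eval_zero]
  rw [exists_mem_approxModule_eq_X_smul_iff, residualMatrix, vecMul_fromCols,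
    ← Sum.elim_zero_zero, Sum.elim_eq_iff, hconst, hhigh]

theorem exists_vecMul_eq_of_X_pow_smul_eq (hdvd : ∀ i j, (X : K[X]) ^ d j ∣ (P * F) i j)
    (hrank : ∀ u, u ᵥ* residualMatrix d F P = 0 → u = 0) {p : Fin m → K[X]}
    (hp : p ∈ approxModule d F) (k : ℕ) (w : Fin m → K[X]) (hw : w ᵥ* P = (X : K[X]) ^ k • p) :
    ∃ w', w' ᵥ* P = p := by
  induction k generalizing w with
  | zero => exact ⟨w, by simpa using hw⟩
  | succ k ih =>
    have hw0 : (fun i => (w i).eval 0) = 0 := hrank _ <|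
      (vecMul_residualMatrix_eq_zero_iff hdvd w).mpr
        ⟨X ^ k • p, Submodule.smul_mem _ _ hp, by rw [hw, pow_succ', mul_smul]⟩
    have hwX := eq_X_smul_divX fun i => (coeff_zero_eq_eval_zero _).trans (congr_fun hw0 i)
    refine ih (fun i => (w i).divX) (smul_right_injective _ (X_ne_zero (R := K)) ?_)
    beta_reduce
    rw [← smul_vecMul, ← hwX, hw, pow_succ', mul_smul]

end

theorem approx_basis_iff_full_rank_general
    {K : Type*} [Field K] {m n : ℕ} (d : Fin n → ℕ)
    (F : Matrix (Fin m) (Fin n) K[X])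
    (P : Matrix (Fin m) (Fin m) K[X])
    (hdvd : ∀ i j, (X : K[X]) ^ d j ∣ (P * F) i j)
    (hdet : ∃ c : K, c ≠ 0 ∧ ∃ δ : ℕ, P.det = Polynomial.C c * X ^ δ) :
    rowsBasis P (approxModule d F) ↔
      (Matrix.fromCols (P.map (Polynomial.eval 0))
        (Matrix.of fun i j => ((P * F) i j).coeff (d j))).rank = m := by
  obtain ⟨c, hc, δ, hPdet⟩ := hdet
  change _ ↔ (residualMatrix d F P).rank = m
  rw [rank_eq_iff_vecMul_eq_zero]
  constructor
  · rintro ⟨hli, hspan⟩ u hu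
    obtain ⟨q, hq, hPq⟩ := (vecMul_residualMatrix_eq_zero_iff hdvd fun i => C (u i)).mp
      (by simpa using hu)
    obtain ⟨w, rfl⟩ := (exists_vecMul_eq_iff_mem_span_row P q).mpr (hspan ▸ hq)
    have hCu : (fun i => C (u i)) = (X : K[X]) • w :=
      vecMul_injective_iff.mpr hli (by simp only [hPq, smul_vecMul])
    funext i
    simpa using congr_arg (coeff · 0) (congr_fun hCu i)
  · intro hrank
    have hdet_dvd : P.det ∣ X ^ δ :=
      hPdet ▸ (isUnit_C.mpr hc.isUnit).mul_left_dvd.mpr dvd_rfl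
    refine ⟨linearIndependent_rows_of_det_ne_zero (ne_zero_of_dvd_ne_zero
      (pow_ne_zero δ X_ne_zero) hdet_dvd), le_antisymm ?_ fun p hp => ?_⟩
    · exact Submodule.span_le.mpr (Set.range_subset_iff.mpr fun i j => hdvd i j)
    obtain ⟨w, hw⟩ := exists_vecMul_eq_smul_of_det_dvd P hdet_dvd p
    exact (exists_vecMul_eq_iff_mem_span_row P p).mp
      (exists_vecMul_eq_of_X_pow_smul_eq hdvd hrank hp δ w hw)

/-- Certification of approximant bases via the rank of `[P(0) C]`. -/
theorem approx_basis_iff_full_rank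
    {K : Type*} [Field K] {m n : ℕ} (d : Fin n → ℕ) (hd : ∀ j, 0 < d j)
    (F : Matrix (Fin m) (Fin n) K[X])
    (hF : ∀ i j, (F i j).degree < (d j : ℕ∞))
    (P : Matrix (Fin m) (Fin m) K[X])
    (hdvd : ∀ i j, (X : K[X]) ^ d j ∣ (P * F) i j)
    (hdet : ∃ c : K, c ≠ 0 ∧ ∃ δ : ℕ, P.det = Polynomial.C c * X ^ δ) :
    rowsBasis P (approxModule d F) ↔
      (Matrix.fromCols (P.map (Polynomial.eval 0))
        (Matrix.of fun i j => ((P * F) i j).coeff (d j))).rank = m :=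
  approx_basis_iff_full_rank_general d F P hdvd hdet
end
end

section
/- Let d ∈ (Z_{>0})^n, F ∈ K[x]^{m×n} with column degrees < d, and let P ∈ K[x]^{m×m} be a basis of A_d(F). Then det(P) divides x^{m·max(d)}; in particular det(P) is a nonzero monomial in K[x]. -/
open Polynomial Matrix

noncomputable section

/-! Every row of `X ^ max d • 1` lies in `A_d(F)`, so `X ^ max d • 1 = U * P` for a polynomial
matrix `U`. Taking determinants, `det P` divides `X ^ (m * max d)`, and as `X` is prime every such
divisor is a unit, i.e. a nonzero constant, times a power of `X`. -/

theorem Matrix.exists_mul_eq_of_rows_mem_span {R ι κ μ : Type*} [CommSemiring R] [Fintype κ]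
    (B : Matrix κ ι R) (A : Matrix μ ι R)
    (hA : ∀ i, A i ∈ Submodule.span R (Set.range B)) : ∃ U : Matrix μ κ R, U * B = A := by
  choose U hU using fun i => (Submodule.mem_span_range_iff_exists_fun R).mp (hA i)
  exact ⟨of U, funext fun i => (vecMul_eq_sum _ _).trans (hU i)⟩

theorem Matrix.det_dvd_pow_of_mul_eq_smul_one {R n : Type*} [CommRing R] [Fintype n]
    [DecidableEq n] {U P : Matrix n n R} {a : R} (h : U * P = a • 1) :
    P.det ∣ a ^ Fintype.card n :=
  Dvd.intro_left U.det <| by rw [← det_mul, h, det_smul, det_one, mul_one]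

theorem Polynomial.exists_eq_C_mul_X_pow_of_dvd_X_pow {K : Type*} [Field K] {p : K[X]} {N : ℕ}
    (h : p ∣ X ^ N) : ∃ c : K, c ≠ 0 ∧ ∃ δ : ℕ, p = C c * X ^ δ := by
  obtain ⟨δ, -, hassoc⟩ := (dvd_prime_pow prime_X N).mp h
  obtain ⟨u, hu⟩ := hassoc.symm
  obtain ⟨c, hc, hcu⟩ := isUnit_iff.mp u.isUnit
  exact ⟨c, hc.ne_zero, δ, by rw [← hu, ← hcu, mul_comm]⟩

theorem X_pow_smul_mem_approxModule {K : Type*} [Field K] {m n : ℕ} {d : Fin n → ℕ}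
    (F : Matrix (Fin m) (Fin n) K[X]) {s : ℕ} (hs : ∀ j, d j ≤ s) (p : Fin m → K[X]) :
    (X : K[X]) ^ s • p ∈ approxModule d F := fun j => by
  rw [smul_vecMul, Pi.smul_apply, smul_eq_mul]
  exact (pow_dvd_pow X (hs j)).mul_right _

theorem approx_basis_det_monomial_general
    {K : Type*} [Field K] {m n : ℕ} (d : Fin n → ℕ)
    (F : Matrix (Fin m) (Fin n) K[X])
    (P : Matrix (Fin m) (Fin m) K[X])
    (hP : rowsBasis P (approxModule d F)) :
    P.det ∣ (X : K[X]) ^ (m * Finset.univ.sup d) ∧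
      ∃ c : K, c ≠ 0 ∧ ∃ δ : ℕ, P.det = Polynomial.C c * X ^ δ := by
  have hrows : ∀ i, ((X : K[X]) ^ Finset.univ.sup d • (1 : Matrix (Fin m) (Fin m) K[X])) i ∈
      Submodule.span K[X] (Set.range P) := fun i =>
    hP.2 ▸ X_pow_smul_mem_approxModule F (fun j => Finset.le_sup (Finset.mem_univ j)) _
  obtain ⟨U, hU⟩ := exists_mul_eq_of_rows_mem_span P _ hrows
  have hdvd : P.det ∣ (X : K[X]) ^ (m * Finset.univ.sup d) := by
    simpa only [Fintype.card_fin, ← pow_mul, mul_comm] using det_dvd_pow_of_mul_eq_smul_one hU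
  exact ⟨hdvd, exists_eq_C_mul_X_pow_of_dvd_X_pow hdvd⟩

/-- The determinant of a basis of `A_d(F)` divides `x^{m·max(d)}`; in particular it
is a nonzero monomial. -/
theorem approx_basis_det_monomial
    {K : Type*} [Field K] {m n : ℕ} (d : Fin n → ℕ) (hd : ∀ j, 0 < d j)
    (F : Matrix (Fin m) (Fin n) K[X])
    (hF : ∀ i j, (F i j).degree < (d j : ℕ∞))
    (P : Matrix (Fin m) (Fin m) K[X])
    (hP : rowsBasis P (approxModule d F)) :
    P.det ∣ (X : K[X]) ^ (m * Finset.univ.sup d) ∧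
      ∃ c : K, c ≠ 0 ∧ ∃ δ : ℕ, P.det = Polynomial.C c * X ^ δ :=
  approx_basis_det_monomial_general d F P hP
end
end

section
/- Let d ∈ (Z_{>0})^n and F ∈ K[x]^{m×n} with column degrees < d. Let P ∈ K[x]^{m×m} be nonsingular but not a basis of A_d(F), while its rows lie in A_d(F) and det(P) is a nonzero monomial. Then, writing P = U·A for a basis A of A_d(F) and U ∈ K[x]^{m×m}, the matrix U(0) is singular, and consequently the constant matrix [P(0) C] has rank < m, where C is the constant coefficient of P·F·diag(x^{−d_1},...,x^{−d_n}). -/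
open Polynomial Matrix

noncomputable section

/-!
If `U` were unimodular, `P = U·A` would be a basis of `A_d(F)`; so `det U` is a non-unit divisor
of the monomial `det P`, hence divisible by `x`, and `U(0)` is singular. Every entry in column `j`
of `A·F` is divisible by `x^{d_j}`, so the coefficient of `x^{d_j}` in `(U·A·F)_{ij}` only sees
`U(0)`: `[P(0) C] = U(0)·[A(0) C_A]`, whose rank is at most `rank U(0) < m`.
-/

theorem Polynomial.X_dvd_of_dvd_X_pow {R : Type*} [CommRing R] [IsDomain R] {p : R[X]} {n : ℕ}
    (h : p ∣ X ^ n) (hp : ¬IsUnit p) : X ∣ p := by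
  obtain ⟨i, -, hi⟩ := (dvd_prime_pow prime_X n).1 h
  rcases i with _ | i
  · exact absurd (associated_one_iff_isUnit.1 (by simpa using hi)) hp
  · exact (dvd_pow_self X i.succ_ne_zero).trans hi.symm.dvd

theorem Polynomial.coeff_mul_of_X_pow_dvd_s7 {R : Type*} [CommSemiring R] (p : R[X]) {q : R[X]}
    {n : ℕ} (h : X ^ n ∣ q) : (p * q).coeff n = p.coeff 0 * q.coeff n := by
  obtain ⟨r, rfl⟩ := h
  simp only [mul_left_comm p, coeff_X_pow_mul', le_refl, if_true, Nat.sub_self, mul_coeff_zero]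

theorem Matrix.rank_lt_card_of_det_eq_zero {K ι : Type*} [Field K] [Fintype ι] [DecidableEq ι]
    {M : Matrix ι ι K} (h : M.det = 0) : M.rank < Fintype.card ι := by
  obtain ⟨v, hv, hMv⟩ := exists_mulVec_eq_zero_iff.2 h
  have hker : 0 < Module.finrank K (LinearMap.ker M.mulVecLin) :=
    Module.finrank_pos_iff_exists_ne_zero.2 ⟨⟨v, hMv⟩, fun h => hv (congrArg Subtype.val h)⟩
  have hsum := LinearMap.finrank_range_add_finrank_ker M.mulVecLin
  rw [Module.finrank_fintype_fun_eq_card] at hsum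
  exact Nat.lt_of_lt_of_eq (Nat.lt_add_of_pos_right hker) hsum

section

variable {K : Type*} [Field K]

theorem rowsBasis.isUnit_mul {κ ι : Type*} [Fintype κ] [DecidableEq κ]
    {N : Submodule K[X] (ι → K[X])} {A : Matrix κ ι K[X]} (hA : rowsBasis A N)
    {U : Matrix κ κ K[X]} (hU : IsUnit U) : rowsBasis (U * A) N := by
  have hcomp : (U * A).vecMulLinear = A.vecMulLinear ∘ₗ U.vecMulLinear :=
    LinearMap.ext fun v => (vecMul_vecMul v U A).symm
  constructor
  · refine vecMul_injective_iff.1 ?_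
    rw [← coe_vecMulLinear, hcomp, LinearMap.coe_comp]
    exact (vecMul_injective_iff.2 hA.1).comp (vecMul_injective_of_isUnit hU)
  · calc Submodule.span K[X] (Set.range fun i => (U * A) i)
        = LinearMap.range (U * A).vecMulLinear := (range_vecMulLinear _).symm
      _ = LinearMap.range A.vecMulLinear := by
        rw [hcomp, LinearMap.range_comp_of_range_eq_top]
        exact LinearMap.range_eq_top.2 (vecMul_surjective_iff_isUnit.2 hU)
      _ = N := (range_vecMulLinear A).trans hA.2

theorem coeff_mul_mul_of_mem_approxModule {κ ι : Type*} [Fintype κ] {m n : ℕ}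
    {d : Fin n → ℕ} {F : Matrix (Fin m) (Fin n) K[X]} {A : Matrix κ (Fin m) K[X]}
    (hA : ∀ k, A k ∈ approxModule d F) (U : Matrix ι κ K[X]) :
    (of fun i j => ((U * A * F) i j).coeff (d j)) =
      U.map (eval 0) * of fun k j => ((A * F) k j).coeff (d j) := by
  have hAF : ∀ k j, X ^ d j ∣ (A * F) k j := fun k j => hA k j
  ext i j
  simp only [Matrix.mul_assoc, mul_apply (M := U), finsetSum_coeff, of_apply]
  refine Finset.sum_congr rfl fun k _ => ?_
  rw [coeff_mul_of_X_pow_dvd_s7 _ (hAF k j)]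
  simp only [map_apply, of_apply, coeff_zero_eq_eval_zero]

end

theorem not_basis_rank_deficient_general
    {K : Type*} [Field K] {m n : ℕ} (d : Fin n → ℕ)
    (F : Matrix (Fin m) (Fin n) K[X])
    (P : Matrix (Fin m) (Fin m) K[X])
    (hmono : ∃ c : K, c ≠ 0 ∧ ∃ δ : ℕ, P.det = Polynomial.C c * X ^ δ)
    (hnotbasis : ¬ rowsBasis P (approxModule d F))
    (A : Matrix (Fin m) (Fin m) K[X]) (hA : rowsBasis A (approxModule d F))
    (U : Matrix (Fin m) (Fin m) K[X]) (hU : P = U * A) :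
    (U.map (Polynomial.eval 0)).det = 0 ∧
      (Matrix.fromCols (P.map (Polynomial.eval 0))
        (Matrix.of fun i j => ((P * F) i j).coeff (d j))).rank < m := by
  obtain ⟨c, hc, δ, hdet⟩ := hmono
  have hUdet : ¬IsUnit U.det := fun h =>
    hnotbasis (hU ▸ hA.isUnit_mul ((isUnit_iff_isUnit_det U).2 h))
  have hUdvd : U.det ∣ X ^ δ := by
    rw [← (isUnit_C.2 hc.isUnit).dvd_mul_left, ← hdet, hU, det_mul]
    exact dvd_mul_right _ _
  have hU0 : (U.map (eval 0)).det = 0 := by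
    rw [show (U.map (eval 0)).det = U.det.eval 0 from ((evalRingHom (0 : K)).map_det U).symm,
      ← coeff_zero_eq_eval_zero, ← X_dvd_iff]
    exact X_dvd_of_dvd_X_pow hUdvd hUdet
  have hArows : ∀ k, A k ∈ approxModule d F := fun k =>
    hA.2 ▸ Submodule.subset_span (Set.mem_range_self k)
  have hfactor : fromCols (P.map (eval 0)) (of fun i j => ((P * F) i j).coeff (d j)) =
      U.map (eval 0) * fromCols (A.map (eval 0)) (of fun k j => ((A * F) k j).coeff (d j)) := by
    rw [mul_fromCols, ← coeff_mul_mul_of_mem_approxModule hArows, ← hU, ← coe_evalRingHom,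
      ← Matrix.map_mul, ← hU]
  refine ⟨hU0, ?_⟩
  rw [hfactor]
  exact (rank_mul_le_left _ _).trans_lt
    ((rank_lt_card_of_det_eq_zero hU0).trans_eq (Fintype.card_fin m))

/-- If `P` is nonsingular, has its rows in `A_d(F)`, has monomial determinant, but is
not a basis of `A_d(F)`, then for any factorization `P = U·A` through a basis `A`, the
constant matrix `U(0)` is singular and `[P(0) C]` has rank `< m`. -/
theorem not_basis_rank_deficient
    {K : Type*} [Field K] {m n : ℕ} (d : Fin n → ℕ) (hd : ∀ j, 0 < d j)
    (F : Matrix (Fin m) (Fin n) K[X])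
    (hF : ∀ i j, (F i j).degree < (d j : ℕ∞))
    (P : Matrix (Fin m) (Fin m) K[X])
    (hPdet : P.det ≠ 0)
    (hrows : ∀ i, P i ∈ approxModule d F)
    (hmono : ∃ c : K, c ≠ 0 ∧ ∃ δ : ℕ, P.det = Polynomial.C c * X ^ δ)
    (hnotbasis : ¬ rowsBasis P (approxModule d F))
    (A : Matrix (Fin m) (Fin m) K[X]) (hA : rowsBasis A (approxModule d F))
    (U : Matrix (Fin m) (Fin m) K[X]) (hU : P = U * A) :
    (U.map (Polynomial.eval 0)).det = 0 ∧
      (Matrix.fromCols (P.map (Polynomial.eval 0))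
        (Matrix.of fun i j => ((P * F) i j).coeff (d j))).rank < m :=
  not_basis_rank_deficient_general d F P hmono hnotbasis A hA U hU
end
end
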